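/- arXiv:1206.0489 — 2 statements merged into one kernel-verified Lean document; each statement's English description precedes it below -/
import Mathlib

section
/- If X, Y, Z are independent real-valued continuous random variables with all relevant differential entropies existing and finite, then h(X+Y+Z) + h(Y) ≤ h(X+Y) + h(Y+Z). -/
open MeasureTheory ProbabilityTheory

/-- The differential entropy of a random variable `X` (with respect to a reference
measure `μ` on the value space, typically Lebesgue measure): if `f` is the density of
the law of `X` with respect to `μ`, then `h(X) = -E[log f(X)]`. -/
noncomputable def dent {Ω E : Type*} [MeasurableSpace Ω] [MeasurableSpace E]
    (μ : Measure E) (P : Measure Ω) (X : Ω → E) : ℝ :=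
  -∫ x, Real.log (((P.map X).rnDeriv μ x).toReal) ∂(P.map X)

/-- `X` is a continuous random variable (its law is absolutely continuous with respect
to the reference measure `μ`, i.e. it has a density `f`), and its differential entropy
exists and is finite (the log-density is integrable under the law of `X`). -/
def FiniteDent {Ω E : Type*} [MeasurableSpace Ω] [MeasurableSpace E]
    (μ : Measure E) (P : Measure Ω) (X : Ω → E) : Prop :=
  P.map X ≪ μ ∧
    Integrable (fun x => Real.log (((P.map X).rnDeriv μ x).toReal)) (P.map X)

/-!
Write `f_W` for the density of `W`. The ratio
`R = f_{X+Y}(X+Y) f_{Y+Z}(Y+Z) / (f_{X+Y+Z}(X+Y+Z) f_Y(Y))` has expectation at most `1`: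
integrating `Y` against its law cancels `f_Y`; after the substitution `u = x + y + z`, integrating
`Z` turns `f_{X+Y}(u - z)` into `f_{X+Y+Z}(u)`, because the law of `X + Y + Z` is the convolution
of the laws of `X + Y` and `Z`; what is left is `∫ f_{Y+Z}(u - x) du = 1`. Since `log t ≤ t - 1`,
`E[log R] ≤ E[R] - 1 ≤ 0`, and `E[log R] = h(X+Y+Z) + h(Y) - h(X+Y) - h(Y+Z)`.
-/

open Measure
open scoped ENNReal

theorem lintegral_div_rnDeriv_le {α : Type*} [MeasurableSpace α] {μ ν : Measure α}
    [μ.HaveLebesgueDecomposition ν] (hμν : μ ≪ ν) {F : α → ℝ≥0∞} (hF : AEMeasurable F ν) :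
    ∫⁻ x, F x / μ.rnDeriv ν x ∂μ ≤ ∫⁻ x, F x ∂ν := by
  rw [← lintegral_rnDeriv_mul (f := fun x => F x / μ.rnDeriv ν x) hμν
    (hF.div (measurable_rnDeriv μ ν).aemeasurable)]
  exact lintegral_mono fun x => ENNReal.mul_div_le

theorem integral_log_toReal_nonpos_of_lintegral_le_one {Ω : Type*} [MeasurableSpace Ω]
    {P : Measure Ω} [IsProbabilityMeasure P] {G : Ω → ℝ≥0∞} (hGm : AEMeasurable G P)
    (hG0 : ∀ᵐ ω ∂P, G ω ≠ 0) (hG : ∫⁻ ω, G ω ∂P ≤ 1) :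
    ∫ ω, Real.log (G ω).toReal ∂P ≤ 0 := by
  by_cases hlog : Integrable (fun ω => Real.log (G ω).toReal) P
  swap
  · exact (integral_undef hlog).le
  have hGtop : ∫⁻ ω, G ω ∂P ≠ ∞ := (hG.trans_lt ENNReal.one_lt_top).ne
  have hGint : Integrable (fun ω => (G ω).toReal) P :=
    integrable_toReal_of_lintegral_ne_top hGm hGtop
  have hlog_le : ∀ᵐ ω ∂P, Real.log (G ω).toReal ≤ (G ω).toReal - 1 := by
    filter_upwards [hG0, ae_lt_top' hGm hGtop] with ω h0 htop
    exact Real.log_le_sub_one_of_pos (ENNReal.toReal_pos h0 htop.ne)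
  calc ∫ ω, Real.log (G ω).toReal ∂P ≤ ∫ ω, ((G ω).toReal - 1) ∂P :=
        integral_mono_ae hlog (hGint.sub (integrable_const 1)) hlog_le
    _ = (∫⁻ ω, G ω ∂P).toReal - 1 := by
        rw [integral_sub hGint (integrable_const 1), integral_toReal hGm (ae_lt_top' hGm hGtop)]
        simp
    _ ≤ 0 := by
        have := ENNReal.toReal_mono ENNReal.one_ne_top hG
        rw [ENNReal.toReal_one] at this
        linarith

theorem ENNReal.log_toReal_mul_div_div {a b c d : ℝ≥0∞} (ha : 0 < a.toReal)
    (hb : 0 < b.toReal) (hc : 0 < c.toReal) (hd : 0 < d.toReal) :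
    Real.log (a * b / c / d).toReal
      = Real.log a.toReal + Real.log b.toReal - Real.log c.toReal - Real.log d.toReal := by
  rw [ENNReal.toReal_div, ENNReal.toReal_div, ENNReal.toReal_mul,
    Real.log_div (by positivity) hd.ne', Real.log_div (by positivity) hc.ne',
    Real.log_mul ha.ne' hb.ne']

section AddGroup

variable {G : Type*} [AddGroup G] [MeasurableSpace G] [MeasurableAdd₂ G] [MeasurableNeg G]
  {μ : Measure G} [IsAddRightInvariant μ]

theorem withDensity_conv [SFinite μ] (ν : Measure G) [SFinite ν] {g : G → ℝ≥0∞}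
    (hg : Measurable g) :
    μ.withDensity g ∗ ν = μ.withDensity fun u => ∫⁻ z, g (u - z) ∂ν := by
  refine ext_of_lintegral _ fun φ hφ => ?_
  calc ∫⁻ u, φ u ∂(μ.withDensity g ∗ ν)
      = ∫⁻ x, ∫⁻ z, g x * φ (x + z) ∂ν ∂μ := by
        rw [lintegral_conv hφ, lintegral_withDensity_eq_lintegral_mul _ hg (by fun_prop)]
        refine lintegral_congr fun x => ?_
        rw [Pi.mul_apply, lintegral_const_mul _ (by fun_prop)]
    _ = ∫⁻ z, ∫⁻ u, g (u - z) * φ u ∂μ ∂ν := by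
        rw [lintegral_lintegral_swap (by fun_prop)]
        refine lintegral_congr fun z => ?_
        rw [← lintegral_add_right_eq_self (fun u => g (u - z) * φ u) z]
        simp only [add_sub_cancel_right]
    _ = ∫⁻ u, φ u ∂μ.withDensity fun u => ∫⁻ z, g (u - z) ∂ν := by
        rw [lintegral_lintegral_swap (by fun_prop),
          lintegral_withDensity_eq_lintegral_mul _ (by fun_prop) hφ]
        refine lintegral_congr fun u => ?_
        rw [Pi.mul_apply, lintegral_mul_const _ (by fun_prop)]

theorem rnDeriv_conv_ae_eq_lintegral [SigmaFinite μ] {ρ : Measure G} (ν : Measure G) [SFinite ν]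
    [ρ.HaveLebesgueDecomposition μ] (hρ : ρ ≪ μ) :
    (ρ ∗ ν).rnDeriv μ =ᵐ[μ] fun u => ∫⁻ z, ρ.rnDeriv μ (u - z) ∂ν := by
  have h := withDensity_conv (μ := μ) ν (measurable_rnDeriv ρ μ)
  rw [withDensity_rnDeriv_eq ρ μ hρ] at h
  rw [h]
  exact rnDeriv_withDensity μ (by fun_prop)

end AddGroup

section AddCommGroup

variable {G : Type*} [AddCommGroup G] [MeasurableSpace G] [MeasurableAdd₂ G] [MeasurableNeg G]
  {μ : Measure G} [SFinite μ] [IsAddRightInvariant μ]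
  {ν : Measure G} [SFinite ν] {f p q : G → ℝ≥0∞}

theorem lintegral_lintegral_div_conv_le (hf : Measurable f) (hp : Measurable p)
    (hq : Measurable q) (hconv : f =ᵐ[μ] fun u => ∫⁻ z, p (u - z) ∂ν) (x : G) :
    ∫⁻ z, ∫⁻ y, p (x + y) * q (y + z) / f (x + y + z) ∂μ ∂ν ≤ ∫⁻ u, q u ∂μ :=
  calc ∫⁻ z, ∫⁻ y, p (x + y) * q (y + z) / f (x + y + z) ∂μ ∂ν
      = ∫⁻ z, ∫⁻ u, p (u - z) * (q (u - x) / f u) ∂μ ∂ν := by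
        refine lintegral_congr fun z => ?_
        conv_rhs => rw [← lintegral_add_right_eq_self _ (x + z)]
        refine lintegral_congr fun y => ?_
        rw [show y + (x + z) - z = x + y by abel, show y + (x + z) - x = y + z by abel,
          show y + (x + z) = x + y + z by abel, mul_div_assoc]
    _ = ∫⁻ u, (∫⁻ z, p (u - z) ∂ν) * (q (u - x) / f u) ∂μ := by
        rw [lintegral_lintegral_swap (by fun_prop)]
        exact lintegral_congr fun u => lintegral_mul_const _ (by fun_prop)
    _ ≤ ∫⁻ u, q (u - x) ∂μ := by
        refine lintegral_mono_ae ?_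
        filter_upwards [hconv] with u hu
        rw [← hu]
        exact ENNReal.mul_div_le
    _ = ∫⁻ u, q u ∂μ := lintegral_sub_right_eq_self q x

theorem lintegral_prod_div_conv_div_rnDeriv_le (μX μY : Measure G) [IsProbabilityMeasure μX]
    [SFinite μY] [μY.HaveLebesgueDecomposition μ] (hY : μY ≪ μ)
    (hf : Measurable f) (hp : Measurable p) (hq : Measurable q)
    (hconv : f =ᵐ[μ] fun u => ∫⁻ z, p (u - z) ∂ν) :
    ∫⁻ v, p (v.1 + v.2.1) * q (v.2.1 + v.2.2) / f (v.1 + v.2.1 + v.2.2) / μY.rnDeriv μ v.2.1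
      ∂(μX.prod (μY.prod ν)) ≤ ∫⁻ u, q u ∂μ := by
  have hg := measurable_rnDeriv μY μ
  rw [lintegral_prod _ (by fun_prop)]
  calc ∫⁻ x, ∫⁻ v, p (x + v.1) * q (v.1 + v.2) / f (x + v.1 + v.2) / μY.rnDeriv μ v.1
        ∂(μY.prod ν) ∂μX
      ≤ ∫⁻ _, ∫⁻ u, q u ∂μ ∂μX := lintegral_mono fun x => ?_
    _ = ∫⁻ u, q u ∂μ := by simp
  rw [lintegral_prod_symm _ (by fun_prop)]
  calc ∫⁻ z, ∫⁻ y, p (x + y) * q (y + z) / f (x + y + z) / μY.rnDeriv μ y ∂μY ∂ν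
      ≤ ∫⁻ z, ∫⁻ y, p (x + y) * q (y + z) / f (x + y + z) ∂μ ∂ν :=
        lintegral_mono fun z => lintegral_div_rnDeriv_le hY (by fun_prop)
    _ ≤ ∫⁻ u, q u ∂μ := lintegral_lintegral_div_conv_le hf hp hq hconv x

end AddCommGroup

section RandomVariable

variable {Ω E : Type*} [MeasurableSpace Ω] [MeasurableSpace E] {μ : Measure E} {P : Measure Ω}

theorem dent_eq_neg_integral_log_pdf {W : Ω → E} (hW : Measurable W) :
    dent μ P W = -∫ ω, Real.log (pdf W P μ (W ω)).toReal ∂P :=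
  congrArg Neg.neg
    (integral_map hW.aemeasurable (measurable_pdf W P μ).ennreal_toReal.log.aestronglyMeasurable)

theorem FiniteDent.integrable_log_pdf {W : Ω → E} (h : FiniteDent μ P W) (hW : Measurable W) :
    Integrable (fun ω => Real.log (pdf W P μ (W ω)).toReal) P :=
  (integrable_map_measure (measurable_pdf W P μ).ennreal_toReal.log.aestronglyMeasurable
    hW.aemeasurable).mp h.2

theorem ae_toReal_pdf_pos [SigmaFinite μ] [IsFiniteMeasure P] {W : Ω → E} (hW : Measurable W)
    (h : P.map W ≪ μ) : ∀ᵐ ω ∂P, 0 < (pdf W P μ (W ω)).toReal := by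
  refine ae_of_ae_map (p := fun u => 0 < (pdf W P μ u).toReal) hW.aemeasurable ?_
  filter_upwards [rnDeriv_pos h, h.ae_le (rnDeriv_lt_top (P.map W) μ)] with u hpos htop
  exact ENNReal.toReal_pos hpos.ne' htop.ne

theorem dent_add_dent_le_of_lintegral_pdf_ratio_le_one [SigmaFinite μ] [IsProbabilityMeasure P]
    {A B C D : Ω → E} (hAm : Measurable A) (hBm : Measurable B) (hCm : Measurable C)
    (hDm : Measurable D) (hA : FiniteDent μ P A) (hB : FiniteDent μ P B)
    (hC : FiniteDent μ P C) (hD : FiniteDent μ P D)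
    (hratio : ∫⁻ ω, pdf A P μ (A ω) * pdf B P μ (B ω) / pdf C P μ (C ω) / pdf D P μ (D ω) ∂P
      ≤ 1) :
    dent μ P C + dent μ P D ≤ dent μ P A + dent μ P B := by
  have hpos : ∀ᵐ ω ∂P, 0 < (pdf A P μ (A ω)).toReal ∧ 0 < (pdf B P μ (B ω)).toReal ∧
      0 < (pdf C P μ (C ω)).toReal ∧ 0 < (pdf D P μ (D ω)).toReal := by
    filter_upwards [ae_toReal_pdf_pos hAm hA.1, ae_toReal_pdf_pos hBm hB.1,
      ae_toReal_pdf_pos hCm hC.1, ae_toReal_pdf_pos hDm hD.1] with ω ha hb hc hd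
    exact ⟨ha, hb, hc, hd⟩
  have hgibbs := integral_log_toReal_nonpos_of_lintegral_le_one (by fun_prop)
    (hpos.mono fun ω ⟨ha, hb, hc, hd⟩ => (ENNReal.toReal_pos_iff.mp
      (by simp only [ENNReal.toReal_div, ENNReal.toReal_mul]; positivity)).1.ne') hratio
  have iA := hA.integrable_log_pdf hAm
  have iB := hB.integrable_log_pdf hBm
  have iC := hC.integrable_log_pdf hCm
  rw [integral_congr_ae (hpos.mono fun ω ⟨ha, hb, hc, hd⟩ =>
      ENNReal.log_toReal_mul_div_div ha hb hc hd),
    integral_sub ((iA.fun_add iB).sub' iC) (hD.integrable_log_pdf hDm),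
    integral_sub (iA.fun_add iB) iC, integral_add iA iB] at hgibbs
  rw [dent_eq_neg_integral_log_pdf hAm, dent_eq_neg_integral_log_pdf hBm,
    dent_eq_neg_integral_log_pdf hCm, dent_eq_neg_integral_log_pdf hDm]
  linarith

theorem ProbabilityTheory.iIndepFun.map_prodMk_prodMk_eq_prod [IsProbabilityMeasure P]
    {X Y Z : Ω → E} (hX : Measurable X) (hY : Measurable Y) (hZ : Measurable Z)
    (h : iIndepFun ![X, Y, Z] P) :
    P.map (fun ω => (X ω, Y ω, Z ω)) = (P.map X).prod ((P.map Y).prod (P.map Z)) := by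
  have hmeas : ∀ i, Measurable (![X, Y, Z] i) := fun i => by fin_cases i <;> assumption
  have hYZ : IndepFun Y Z P := by simpa using h.indepFun (show (1 : Fin 3) ≠ 2 by decide)
  have hX_YZ : IndepFun X (fun ω => (Y ω, Z ω)) P := by
    simpa using (h.indepFun_prodMk hmeas 1 2 0 (by decide) (by decide)).symm
  rw [(indepFun_iff_map_prod_eq_prod_map_map hX.aemeasurable (by fun_prop)).mp hX_YZ,
    (indepFun_iff_map_prod_eq_prod_map_map hY.aemeasurable hZ.aemeasurable).mp hYZ]

end RandomVariable

theorem ProbabilityTheory.iIndepFun.lintegral_pdf_ratio_le_one {Ω G : Type*}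
    [MeasurableSpace Ω] [AddCommGroup G] [MeasurableSpace G] [MeasurableAdd₂ G] [MeasurableNeg G]
    {μ : Measure G} [SigmaFinite μ] [IsAddRightInvariant μ] {P : Measure Ω}
    [IsProbabilityMeasure P] {X Y Z : Ω → G} (hX : Measurable X) (hY : Measurable Y)
    (hZ : Measurable Z) (h : iIndepFun ![X, Y, Z] P) (hY' : P.map Y ≪ μ)
    (hXY : P.map (X + Y) ≪ μ) :
    ∫⁻ ω, pdf (X + Y) P μ ((X + Y) ω) * pdf (Y + Z) P μ ((Y + Z) ω)
      / pdf (X + Y + Z) P μ ((X + Y + Z) ω) / pdf Y P μ (Y ω) ∂P ≤ 1 := by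
  have hXY_Z : IndepFun (X + Y) Z P := by
    simpa using h.indepFun_add_left (fun i => by fin_cases i <;> assumption) 0 1 2
      (by decide) (by decide)
  have hconv : pdf (X + Y + Z) P μ =ᵐ[μ] fun u => ∫⁻ z, pdf (X + Y) P μ (u - z) ∂(P.map Z) := by
    rw [pdf, hXY_Z.map_add_eq_map_conv_map (hX.add hY) hZ]
    exact rnDeriv_conv_ae_eq_lintegral _ hXY
  have := isProbabilityMeasure_map (μ := P) hX.aemeasurable
  have := isProbabilityMeasure_map (μ := P) (hY.add hZ).aemeasurable
  calc _ = ∫⁻ v, pdf (X + Y) P μ (v.1 + v.2.1) * pdf (Y + Z) P μ (v.2.1 + v.2.2)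
          / pdf (X + Y + Z) P μ (v.1 + v.2.1 + v.2.2) / pdf Y P μ v.2.1
          ∂((P.map X).prod ((P.map Y).prod (P.map Z))) := by
        rw [← h.map_prodMk_prodMk_eq_prod hX hY hZ, lintegral_map (by fun_prop) (by fun_prop)]
        rfl
    _ ≤ ∫⁻ u, pdf (Y + Z) P μ u ∂μ := lintegral_prod_div_conv_div_rnDeriv_le _ _ hY'
        (measurable_pdf _ _ _) (measurable_pdf _ _ _) (measurable_pdf _ _ _) hconv
    _ ≤ 1 := lintegral_rnDeriv_le.trans_eq measure_univ

/-- If `X, Y, Z` are independent continuous random variables with all relevant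
differential entropies existing and finite, then `h(X+Y+Z) + h(Y) ≤ h(X+Y) + h(Y+Z)`. -/
theorem diffEntropy_triple_sum_ineq
    {Ω : Type*} [MeasurableSpace Ω] (P : Measure Ω) [IsProbabilityMeasure P]
    (X Y Z : Ω → ℝ) (hX : Measurable X) (hY : Measurable Y) (hZ : Measurable Z)
    (hindep : iIndepFun ![X, Y, Z] P)
    (h1 : FiniteDent volume P (X + Y + Z)) (h2 : FiniteDent volume P Y)
    (h3 : FiniteDent volume P (X + Y)) (h4 : FiniteDent volume P (Y + Z)) :
    dent volume P (X + Y + Z) + dent volume P Y ≤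
      dent volume P (X + Y) + dent volume P (Y + Z) :=
  dent_add_dent_le_of_lintegral_pdf_ratio_le_one (hX.add hY) (hY.add hZ) ((hX.add hY).add hZ) hY
    h3 h4 h1 h2 (hindep.lintegral_pdf_ratio_le_one hX hY hZ h2.1 h3.1)
end

section
/- If X, Y, Z, W are independent real-valued continuous random variables with all relevant differential entropies existing and finite, then h(X+Y+Z+W) + h(Y) + h(Z) ≤ h(X+Y) + h(Y+Z) + h(Z+W). -/
/-! With `S = X + Y + Z + W` and `f_V` the density of `V`, let
`R = f_{X+Y}(X+Y) f_{Z+W}(Z+W) f_{Y+Z}(Y+Z) / (f_S(S) f_Y(Y) f_Z(Z))`. The inequality says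
`E[log R] ≤ 0`, and since `log r ≤ r - 1` it suffices that `E[R] ≤ 1`. Integrating against
`law(X, W) ⊗ f_Y ⊗ f_Z`, the densities of `Y` and `Z` cancel. For fixed `x, w`, substituting
`a = x + y` and `s = x + y + z + w` turns the integral over `a` into the convolution
`f_{X+Y} ⋆ f_{Z+W}`, which is `f_S` because `X + Y` and `Z + W` are independent; it cancels the
denominator and leaves `∫ f_{Y+Z}(s - x - w) ds = 1`. -/

open MeasureTheory ProbabilityTheory

open scoped ENNReal

theorem lintegral_withDensity_div_le {α : Type*} [MeasurableSpace α] (μ : Measure α)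
    {ρ : α → ℝ≥0∞} (hρ : Measurable ρ) (g : α → ℝ≥0∞) :
    ∫⁻ a, g a / ρ a ∂μ.withDensity ρ ≤ ∫⁻ a, g a ∂μ :=
  (lintegral_withDensity_le_lintegral_mul μ hρ _).trans
    (lintegral_mono fun _ => ENNReal.mul_div_le)

theorem integral_log_toReal_nonpos {Ω : Type*} [MeasurableSpace Ω] {P : Measure Ω}
    [IsProbabilityMeasure P] {R : Ω → ℝ≥0∞} (hR : AEMeasurable R P)
    (hR_pos : ∀ᵐ ω ∂P, 0 < (R ω).toReal) (hR_le : ∫⁻ ω, R ω ∂P ≤ 1) :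
    ∫ ω, Real.log (R ω).toReal ∂P ≤ 0 := by
  by_cases hlog : Integrable (fun ω => Real.log (R ω).toReal) P
  swap
  · exact (integral_undef hlog).le
  have hR_ne_top : ∫⁻ ω, R ω ∂P ≠ ∞ := (hR_le.trans_lt ENNReal.one_lt_top).ne
  have hR_int : Integrable (fun ω => (R ω).toReal) P :=
    integrable_toReal_of_lintegral_ne_top hR hR_ne_top
  calc ∫ ω, Real.log (R ω).toReal ∂P
      ≤ ∫ ω, ((R ω).toReal - 1) ∂P :=
        integral_mono_ae hlog (hR_int.sub (integrable_const 1))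
          (hR_pos.mono fun ω hω => Real.log_le_sub_one_of_pos hω)
    _ = (∫⁻ ω, R ω ∂P).toReal - 1 := by
        rw [integral_sub hR_int (integrable_const 1), integral_toReal hR (ae_lt_top' hR hR_ne_top)]
        simp
    _ ≤ 0 := sub_nonpos.2 (by simpa using ENNReal.toReal_mono ENNReal.one_ne_top hR_le)

section Convolution

variable {G : Type*} [AddCommGroup G] [MeasurableSpace G] [MeasurableAdd₂ G] [MeasurableNeg G]
  {μ : Measure G} [SFinite μ] [μ.IsAddLeftInvariant]

theorem lintegral_lintegral_mul_div_le_of_lconvolution_le {f g h k : G → ℝ≥0∞}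
    (hf : Measurable f) (hg : Measurable g) (hh : Measurable h) (hk : Measurable k)
    (hfg : f ⋆ₗ[μ] g ≤ᵐ[μ] k) (x w : G) :
    ∫⁻ y, ∫⁻ z, f (x + y) * g (z + w) * (h (y + z) / k (x + y + z + w)) ∂μ ∂μ ≤
      ∫⁻ t, h t ∂μ := by
  set F : G → G → ℝ≥0∞ := fun a c => f a * g c * (h (a + c - (x + w)) / k (a + c))
  have hF : ∀ y z, f (x + y) * g (z + w) * (h (y + z) / k (x + y + z + w)) =
      F (x + y) (z + w) := by
    intro y z
    simp only [F]
    congr 3 <;> abel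
  calc ∫⁻ y, ∫⁻ z, f (x + y) * g (z + w) * (h (y + z) / k (x + y + z + w)) ∂μ ∂μ
      = ∫⁻ a, ∫⁻ c, F a c ∂μ ∂μ := by
        simp_rw [hF, lintegral_add_right_eq_self (F _) w]
        exact lintegral_add_left_eq_self (fun a => ∫⁻ c, F a c ∂μ) x
    _ = ∫⁻ a, ∫⁻ s, F a (-a + s) ∂μ ∂μ := by
        simp_rw [lintegral_add_left_eq_self (F _) (-_)]
    _ = ∫⁻ s, ∫⁻ a, F a (-a + s) ∂μ ∂μ := lintegral_lintegral_swap (by fun_prop)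
    _ = ∫⁻ s, (f ⋆ₗ[μ] g) s * (h (s - (x + w)) / k s) ∂μ := by
        refine lintegral_congr fun s => ?_
        simp only [F, add_neg_cancel_left, lconvolution_def]
        exact lintegral_mul_const _ (by fun_prop)
    _ ≤ ∫⁻ s, h (s - (x + w)) ∂μ :=
        lintegral_mono_ae (hfg.mono fun s hs => (mul_le_mul_left hs _).trans ENNReal.mul_div_le)
    _ = ∫⁻ t, h t ∂μ := lintegral_sub_right_eq_self h (x + w)

end Convolution

namespace ProbabilityTheory.IndepFun

variable {Ω : Type*} [MeasurableSpace Ω] {P : Measure Ω} [IsFiniteMeasure P]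

theorem rnDeriv_map_add_ae_eq_lconvolution {G : Type*} [AddCommGroup G] [MeasurableSpace G]
    [MeasurableAdd₂ G] [MeasurableNeg G] {μ : Measure G} [SigmaFinite μ] [μ.IsAddLeftInvariant]
    {U V : Ω → G} (hUV : IndepFun U V P) (hU : Measurable U) (hV : Measurable V)
    (hU_ac : P.map U ≪ μ) (hV_ac : P.map V ≪ μ) :
    (P.map (U + V)).rnDeriv μ =ᵐ[μ] (P.map U).rnDeriv μ ⋆ₗ[μ] (P.map V).rnDeriv μ := by
  rw [hUV.map_add_eq_map_conv_map hU hV]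
  exact rnDeriv_conv hU_ac hV_ac

theorem map_prodMk_prodMk_eq_prod_withDensity {α E F : Type*} [MeasurableSpace α]
    [MeasurableSpace E] [MeasurableSpace F] {μ : Measure E} {ν : Measure F} [SigmaFinite μ]
    [SigmaFinite ν] {A : Ω → α} {Y : Ω → E} {Z : Ω → F} (hA : Measurable A)
    (hY : Measurable Y) (hZ : Measurable Z) (hA_YZ : IndepFun A (fun ω => (Y ω, Z ω)) P)
    (hYZ : IndepFun Y Z P) (hY_ac : P.map Y ≪ μ) (hZ_ac : P.map Z ≪ ν) :
    P.map (fun ω => (A ω, (Y ω, Z ω))) = (P.map A).prod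
      ((μ.prod ν).withDensity fun p => (P.map Y).rnDeriv μ p.1 * (P.map Z).rnDeriv ν p.2) := by
  rw [← prod_withDensity (by fun_prop) (by fun_prop), Measure.withDensity_rnDeriv_eq _ _ hY_ac,
    Measure.withDensity_rnDeriv_eq _ _ hZ_ac,
    ← (indepFun_iff_map_prod_eq_prod_map_map hY.aemeasurable hZ.aemeasurable).mp hYZ,
    ← (indepFun_iff_map_prod_eq_prod_map_map hA.aemeasurable
      (hY.prodMk hZ).aemeasurable).mp hA_YZ]

end ProbabilityTheory.IndepFun

noncomputable def lawDensity {Ω E : Type*} [MeasurableSpace Ω] [MeasurableSpace E]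
    (μ : Measure E) (P : Measure Ω) (V : Ω → E) (ω : Ω) : ℝ≥0∞ :=
  (P.map V).rnDeriv μ (V ω)

section LawDensity

variable {Ω E : Type*} [MeasurableSpace Ω] [MeasurableSpace E] {μ : Measure E} {P : Measure Ω}
  {V : Ω → E}

theorem integral_log_lawDensity (hV : Measurable V) :
    ∫ ω, Real.log (lawDensity μ P V ω).toReal ∂P = -dent μ P V := by
  rw [dent, neg_neg]
  exact (integral_map hV.aemeasurable
    (Measure.measurable_rnDeriv _ _).ennreal_toReal.log.aestronglyMeasurable).symm

theorem FiniteDent.integrable_log_lawDensity (h : FiniteDent μ P V) (hV : Measurable V) :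
    Integrable (fun ω => Real.log (lawDensity μ P V ω).toReal) P :=
  (integrable_map_measure (Measure.measurable_rnDeriv _ _).ennreal_toReal.log.aestronglyMeasurable
    hV.aemeasurable).mp h.2

theorem ae_toReal_lawDensity_pos [SigmaFinite μ] [IsFiniteMeasure P] (hV : Measurable V)
    (hV_ac : P.map V ≪ μ) : ∀ᵐ ω ∂P, 0 < (lawDensity μ P V ω).toReal := by
  have h_lt_top : ∀ᵐ x ∂P.map V, (P.map V).rnDeriv μ x < ∞ :=
    hV_ac.ae_le (Measure.rnDeriv_lt_top _ _)
  filter_upwards [ae_of_ae_map hV.aemeasurable ((Measure.rnDeriv_pos hV_ac).and h_lt_top)]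
    with ω hω
  exact ENNReal.toReal_pos hω.1.ne' hω.2.ne

end LawDensity

section FourSum

variable {Ω G : Type*} [MeasurableSpace Ω] [AddCommGroup G] [MeasurableSpace G]
  [MeasurableAdd₂ G] {μ : Measure G} [SigmaFinite μ] {P : Measure Ω} {X Y Z W : Ω → G}

/-- The factors are grouped so that both cancellations in
`lintegral_fourSumDensityRatio_le_one`, `ρ * (g / ρ) ≤ g` in `ℝ≥0∞`, need no finiteness or
positivity side conditions. -/
noncomputable def fourSumDensityRatio (μ : Measure G) (P : Measure Ω) (X Y Z W : Ω → G)
    (ω : Ω) : ℝ≥0∞ :=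
  lawDensity μ P (X + Y) ω * lawDensity μ P (Z + W) ω *
    (lawDensity μ P (Y + Z) ω / lawDensity μ P (X + Y + Z + W) ω) /
    (lawDensity μ P Y ω * lawDensity μ P Z ω)

theorem lintegral_fourSumDensityRatio_le_one [MeasurableNeg G] [μ.IsAddLeftInvariant]
    [IsProbabilityMeasure P] (hX : Measurable X) (hY : Measurable Y) (hZ : Measurable Z)
    (hW : Measurable W) (hindep : iIndepFun ![X, Y, Z, W] P) (hY_ac : P.map Y ≪ μ)
    (hZ_ac : P.map Z ≪ μ) (hXY_ac : P.map (X + Y) ≪ μ) (hZW_ac : P.map (Z + W) ≪ μ) :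
    ∫⁻ ω, fourSumDensityRatio μ P X Y Z W ω ∂P ≤ 1 := by
  set fY := (P.map Y).rnDeriv μ
  set fZ := (P.map Z).rnDeriv μ
  set fXY := (P.map (X + Y)).rnDeriv μ
  set fYZ := (P.map (Y + Z)).rnDeriv μ
  set fZW := (P.map (Z + W)).rnDeriv μ
  set fS := (P.map (X + Y + Z + W)).rnDeriv μ
  have hmeas : ∀ i, Measurable (![X, Y, Z, W] i) := by
    intro i; fin_cases i <;> assumption
  have hconv : fXY ⋆ₗ[μ] fZW ≤ᵐ[μ] fS := by
    simp only [fS, show X + Y + Z + W = (X + Y) + (Z + W) by abel]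
    exact ((hindep.indepFun_add_add hmeas 0 1 2 3 (by decide) (by decide) (by decide)
      (by decide)).rnDeriv_map_add_ae_eq_lconvolution (hX.add hY) (hZ.add hW) hXY_ac
        hZW_ac).symm.le
  have hlaw := IndepFun.map_prodMk_prodMk_eq_prod_withDensity (hX.prodMk hW) hY hZ
    (hindep.indepFun_prodMk_prodMk hmeas 0 3 1 2 (by decide) (by decide) (by decide) (by decide))
    (hindep.indepFun (i := 1) (j := 2) (by decide)) hY_ac hZ_ac
  set Φ : (G × G) × (G × G) → ℝ≥0∞ := fun q =>
    fXY (q.1.1 + q.2.1) * fZW (q.2.2 + q.1.2) *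
      (fYZ (q.2.1 + q.2.2) / fS (q.1.1 + q.2.1 + q.2.2 + q.1.2)) / (fY q.2.1 * fZ q.2.2)
  have hinner : ∀ x w,
      ∫⁻ p, Φ ((x, w), p) ∂(μ.prod μ).withDensity (fun p => fY p.1 * fZ p.2) ≤ 1 := by
    intro x w
    calc ∫⁻ p, Φ ((x, w), p) ∂(μ.prod μ).withDensity (fun p => fY p.1 * fZ p.2)
        ≤ ∫⁻ p, fXY (x + p.1) * fZW (p.2 + w) * (fYZ (p.1 + p.2) / fS (x + p.1 + p.2 + w))
            ∂μ.prod μ := lintegral_withDensity_div_le _ (by fun_prop) _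
      _ = ∫⁻ y, ∫⁻ z, fXY (x + y) * fZW (z + w) * (fYZ (y + z) / fS (x + y + z + w))
            ∂μ ∂μ := lintegral_prod _ (by fun_prop)
      _ ≤ ∫⁻ t, fYZ t ∂μ :=
          lintegral_lintegral_mul_div_le_of_lconvolution_le (by fun_prop) (by fun_prop)
            (by fun_prop) (by fun_prop) hconv x w
      _ ≤ 1 := Measure.lintegral_rnDeriv_le.trans prob_le_one
  calc ∫⁻ ω, fourSumDensityRatio μ P X Y Z W ω ∂P
      = ∫⁻ q, Φ q ∂P.map (fun ω => ((X ω, W ω), (Y ω, Z ω))) :=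
        (lintegral_map (f := Φ) (g := fun ω => ((X ω, W ω), (Y ω, Z ω))) (by fun_prop)
          (by fun_prop)).symm
    _ = ∫⁻ xw, ∫⁻ p, Φ (xw, p) ∂(μ.prod μ).withDensity (fun p => fY p.1 * fZ p.2)
          ∂P.map (fun ω => (X ω, W ω)) := by
        rw [hlaw, lintegral_prod _ (by fun_prop)]
    _ ≤ ∫⁻ _, 1 ∂P.map (fun ω => (X ω, W ω)) := lintegral_mono fun xw => hinner xw.1 xw.2
    _ ≤ 1 := by simpa using prob_le_one

theorem ae_toReal_fourSumDensityRatio_pos [IsFiniteMeasure P] (hX : Measurable X)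
    (hY : Measurable Y) (hZ : Measurable Z) (hW : Measurable W)
    (hS_ac : P.map (X + Y + Z + W) ≪ μ) (hY_ac : P.map Y ≪ μ) (hZ_ac : P.map Z ≪ μ)
    (hXY_ac : P.map (X + Y) ≪ μ) (hYZ_ac : P.map (Y + Z) ≪ μ)
    (hZW_ac : P.map (Z + W) ≪ μ) :
    ∀ᵐ ω ∂P, 0 < (fourSumDensityRatio μ P X Y Z W ω).toReal := by
  filter_upwards [ae_toReal_lawDensity_pos (by fun_prop) hS_ac,
    ae_toReal_lawDensity_pos hY hY_ac, ae_toReal_lawDensity_pos hZ hZ_ac,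
    ae_toReal_lawDensity_pos (hX.add hY) hXY_ac,
    ae_toReal_lawDensity_pos (hY.add hZ) hYZ_ac, ae_toReal_lawDensity_pos (hZ.add hW) hZW_ac]
    with ω hS hY hZ hXY hYZ hZW
  simp only [fourSumDensityRatio, ENNReal.toReal_mul, ENNReal.toReal_div]
  positivity

theorem integral_log_fourSumDensityRatio [IsFiniteMeasure P] (hX : Measurable X)
    (hY : Measurable Y) (hZ : Measurable Z) (hW : Measurable W)
    (hS_ent : FiniteDent μ P (X + Y + Z + W)) (hY_ent : FiniteDent μ P Y)
    (hZ_ent : FiniteDent μ P Z) (hXY_ent : FiniteDent μ P (X + Y))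
    (hYZ_ent : FiniteDent μ P (Y + Z)) (hZW_ent : FiniteDent μ P (Z + W)) :
    ∫ ω, Real.log (fourSumDensityRatio μ P X Y Z W ω).toReal ∂P =
      dent μ P (X + Y + Z + W) + dent μ P Y + dent μ P Z -
        (dent μ P (X + Y) + dent μ P (Y + Z) + dent μ P (Z + W)) := by
  have hS : Measurable (X + Y + Z + W) := by fun_prop
  set ℓ : (Ω → G) → Ω → ℝ := fun V ω => Real.log (lawDensity μ P V ω).toReal
  have hlog : (fun ω => Real.log (fourSumDensityRatio μ P X Y Z W ω).toReal) =ᵐ[P]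
      ℓ (X + Y) + ℓ (Z + W) + ℓ (Y + Z) - ℓ (X + Y + Z + W) - (ℓ Y + ℓ Z) := by
    filter_upwards [ae_toReal_lawDensity_pos hS hS_ent.1, ae_toReal_lawDensity_pos hY hY_ent.1,
      ae_toReal_lawDensity_pos hZ hZ_ent.1, ae_toReal_lawDensity_pos (hX.add hY) hXY_ent.1,
      ae_toReal_lawDensity_pos (hY.add hZ) hYZ_ent.1,
      ae_toReal_lawDensity_pos (hZ.add hW) hZW_ent.1] with ω hS hY hZ hXY hYZ hZW
    simp only [fourSumDensityRatio, ℓ, Pi.add_apply, Pi.sub_apply, ENNReal.toReal_mul,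
      ENNReal.toReal_div]
    rw [Real.log_div (by positivity) (by positivity), Real.log_mul (by positivity) (by positivity),
      Real.log_mul (by positivity) (by positivity), Real.log_div (by positivity) (by positivity),
      Real.log_mul (by positivity) (by positivity)]
    ring
  have iS : Integrable (ℓ (X + Y + Z + W)) P := hS_ent.integrable_log_lawDensity hS
  have iY : Integrable (ℓ Y) P := hY_ent.integrable_log_lawDensity hY
  have iZ : Integrable (ℓ Z) P := hZ_ent.integrable_log_lawDensity hZ
  have iXY : Integrable (ℓ (X + Y)) P := hXY_ent.integrable_log_lawDensity (hX.add hY)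
  have iYZ : Integrable (ℓ (Y + Z)) P := hYZ_ent.integrable_log_lawDensity (hY.add hZ)
  have iZW : Integrable (ℓ (Z + W)) P := hZW_ent.integrable_log_lawDensity (hZ.add hW)
  rw [integral_congr_ae hlog, integral_sub' (((iXY.add iZW).add iYZ).sub iS) (iY.add iZ),
    integral_sub' ((iXY.add iZW).add iYZ) iS, integral_add' (iXY.add iZW) iYZ,
    integral_add' iXY iZW, integral_add' iY iZ]
  simp only [ℓ, integral_log_lawDensity hS, integral_log_lawDensity hY,
    integral_log_lawDensity hZ, integral_log_lawDensity (hX.add hY),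
    integral_log_lawDensity (hY.add hZ), integral_log_lawDensity (hZ.add hW)]
  ring

end FourSum

/-- If `X, Y, Z, W` are independent continuous random variables with all relevant
differential entropies existing and finite, then
`h(X+Y+Z+W) + h(Y) + h(Z) ≤ h(X+Y) + h(Y+Z) + h(Z+W)`. -/
theorem diffEntropy_four_sum_ineq
    {Ω : Type*} [MeasurableSpace Ω] (P : Measure Ω) [IsProbabilityMeasure P]
    (X Y Z W : Ω → ℝ) (hX : Measurable X) (hY : Measurable Y) (hZ : Measurable Z)
    (hW : Measurable W)
    (hindep : iIndepFun ![X, Y, Z, W] P)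
    (h1 : FiniteDent volume P (X + Y + Z + W))
    (h2 : FiniteDent volume P Y) (h3 : FiniteDent volume P Z)
    (h4 : FiniteDent volume P (X + Y)) (h5 : FiniteDent volume P (Y + Z))
    (h6 : FiniteDent volume P (Z + W)) :
    dent volume P (X + Y + Z + W) + dent volume P Y + dent volume P Z ≤
      dent volume P (X + Y) + dent volume P (Y + Z) + dent volume P (Z + W) := by
  have hgibbs := integral_log_toReal_nonpos
    (by unfold fourSumDensityRatio lawDensity; fun_prop)
    (ae_toReal_fourSumDensityRatio_pos hX hY hZ hW h1.1 h2.1 h3.1 h4.1 h5.1 h6.1)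
    (lintegral_fourSumDensityRatio_le_one hX hY hZ hW hindep h2.1 h3.1 h4.1 h6.1)
  rw [integral_log_fourSumDensityRatio hX hY hZ hW h1 h2 h3 h4 h5 h6] at hgibbs
  linarith
end
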